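/- Under the hypotheses f' ≠ 0, f''' continuous, {f,x} < 0 on J and f(α) = 0 with α ∈ J, Halley's iteration x_{n+1} = x_n - f(x_n)/(f'(x_n) - f''(x_n)f(x_n)/(2f'(x_n))) converges monotonically to α for any starting value x₀ ∈ J. -/

import Mathlib

/-!
Where `f' > 0`, Halley's method is Newton's method for `Φ = f / √f'`, and `Φ'' = -½ {f,x} Φ`.
At the root `α` we have `Φ(α) = 0 < Φ'(α)`, so negativity of the Schwarzian keeps `Φ` positive,
increasing and convex to the right of `α`. Newton steps from `x > α` therefore land in `[α, x]`,
and the iterates decrease to a fixed point of the continuous Halley map, which can only be `α`.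
Starting left of `α` reduces to this through `f ↦ -f (-·)`, and `f' < 0` through `f ↦ -f`; both
symmetries preserve Halley's map and the Schwarzian, and `f'` has constant sign by Darboux.
-/

/-- The Schwarzian derivative `{f,x} = f'''/f' - (3/2)(f''/f')²`. -/
noncomputable def schwarzian (f : ℝ → ℝ) (x : ℝ) : ℝ :=
  deriv (deriv (deriv f)) x / deriv f x - (3/2) * (deriv (deriv f) x / deriv f x) ^ 2

/-- Halley's iteration function for `f`. -/
noncomputable def halley (f : ℝ → ℝ) (x : ℝ) : ℝ :=
  x - f x / (deriv f x - deriv (deriv f) x * f x / (2 * deriv f x))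

open Set Filter Topology

section Interval

variable {φ ψ ψ' : ℝ → ℝ} {a b : ℝ}

lemma strictMonoOn_Icc_of_hasDerivAt_pos (hφ : ∀ x ∈ Icc a b, HasDerivAt φ (ψ x) x)
    (hψ : ∀ x ∈ Ioo a b, 0 < ψ x) : StrictMonoOn φ (Icc a b) :=
  strictMonoOn_of_hasDerivWithinAt_pos (convex_Icc a b)
    (fun x hx => (hφ x hx).continuousAt.continuousWithinAt)
    (fun x hx => by
      rw [interior_Icc] at hx ⊢
      exact (hφ x (Ioo_subset_Icc_self hx)).hasDerivWithinAt)
    (by rwa [interior_Icc])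

lemma monotoneOn_Icc_of_hasDerivAt_nonneg (hφ : ∀ x ∈ Icc a b, HasDerivAt φ (ψ x) x)
    (hψ : ∀ x ∈ Ioo a b, 0 ≤ ψ x) : MonotoneOn φ (Icc a b) :=
  monotoneOn_of_hasDerivWithinAt_nonneg (convex_Icc a b)
    (fun x hx => (hφ x hx).continuousAt.continuousWithinAt)
    (fun x hx => by
      rw [interior_Icc] at hx ⊢
      exact (hφ x (Ioo_subset_Icc_self hx)).hasDerivWithinAt)
    (by rwa [interior_Icc])

lemma monotoneOn_Icc_of_deriv_nonneg_where_pos_of_pos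
    (hφ : ∀ x ∈ Icc a b, HasDerivAt φ (ψ x) x) (hψ : ∀ x ∈ Icc a b, HasDerivAt ψ (ψ' x) x)
    (hψ' : ∀ x ∈ Ioo a b, 0 < φ x → 0 ≤ ψ' x) (hφa : φ a = 0)
    (hψpos : ∀ x ∈ Ioo a b, 0 < ψ x) : MonotoneOn ψ (Icc a b) := by
  refine monotoneOn_Icc_of_hasDerivAt_nonneg hψ fun x hx => hψ' x hx ?_
  simpa only [hφa] using strictMonoOn_Icc_of_hasDerivAt_pos hφ hψpos
    (left_mem_Icc.2 (hx.1.trans hx.2).le) (Ioo_subset_Icc_self hx) hx.1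

/-- Before the first point where `ψ ≤ 0`, `φ` is positive, so `ψ` grows there. -/
theorem monotoneOn_Icc_of_deriv_nonneg_where_pos
    (hφ : ∀ x ∈ Icc a b, HasDerivAt φ (ψ x) x) (hψ : ∀ x ∈ Icc a b, HasDerivAt ψ (ψ' x) x)
    (hψ' : ∀ x ∈ Ioo a b, 0 < φ x → 0 ≤ ψ' x) (hφa : φ a = 0) (hψa : 0 < ψ a) :
    MonotoneOn ψ (Icc a b) := by
  refine monotoneOn_Icc_of_deriv_nonneg_where_pos_of_pos hφ hψ hψ' hφa fun x hx => ?_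
  by_contra! hx0
  have hψcont : ContinuousOn ψ (Icc a x) := fun y hy =>
    (hψ y (Icc_subset_Icc_right hx.2.le hy)).continuousAt.continuousWithinAt
  set S := Icc a x ∩ ψ ⁻¹' Iic 0
  have hSbdd : BddBelow S := ⟨a, fun y hy => hy.1.1⟩
  have hcS : sInf S ∈ S :=
    (hψcont.preimage_isClosed_of_isClosed isClosed_Icc isClosed_Iic).csInf_mem
      ⟨x, ⟨hx.1.le, le_rfl⟩, hx0⟩ hSbdd
  set c := sInf S
  have hcb : c ≤ b := hcS.1.2.trans hx.2.le
  have hac : a < c := hcS.1.1.lt_of_ne fun h => (h ▸ hcS.2 : ψ a ≤ 0).not_gt hψa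
  have hψpos : ∀ y ∈ Ioo a c, 0 < ψ y := fun y hy => by
    by_contra! hy0
    exact (csInf_le hSbdd ⟨⟨hy.1.le, hy.2.le.trans hcS.1.2⟩, hy0⟩).not_gt hy.2
  have hsub : Icc a c ⊆ Icc a b := Icc_subset_Icc_right hcb
  have hmono := monotoneOn_Icc_of_deriv_nonneg_where_pos_of_pos (fun y hy => hφ y (hsub hy))
    (fun y hy => hψ y (hsub hy)) (fun y hy => hψ' y (Ioo_subset_Ioo_right hcb hy)) hφa hψpos
  have := hmono (left_mem_Icc.2 hac.le) (right_mem_Icc.2 hac.le) hac.le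
  exact (hcS.2 : ψ c ≤ 0).not_gt (hψa.trans_le this)

/-- A Newton step towards the root of a convex increasing function does not overshoot. -/
theorem sub_div_mem_Icc_of_monotoneOn (hab : a ≤ b)
    (hφ : ∀ x ∈ Icc a b, HasDerivAt φ (ψ x) x) (hψ : MonotoneOn ψ (Icc a b)) (hφa : φ a = 0)
    (hψa : 0 < ψ a) : b - φ b / ψ b ∈ Icc a b := by
  rcases hab.eq_or_lt with rfl | hab
  · simp [hφa]
  obtain ⟨c, hc, hslope⟩ := exists_hasDerivAt_eq_slope φ ψ hab
    (fun x hx => (hφ x hx).continuousAt.continuousWithinAt)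
    (fun x hx => hφ x (Ioo_subset_Icc_self hx))
  have hψac : ψ a ≤ ψ c := hψ (left_mem_Icc.2 hab.le) (Ioo_subset_Icc_self hc) hc.1.le
  have hψcb : ψ c ≤ ψ b := hψ (Ioo_subset_Icc_self hc) (right_mem_Icc.2 hab.le) hc.2.le
  have hφb : φ b = ψ c * (b - a) := by
    rw [hslope, hφa, sub_zero, div_mul_cancel₀ _ (sub_ne_zero.2 hab.ne')]
  have hψb : 0 < ψ b := hψa.trans_le (hψac.trans hψcb)
  have hle : φ b / ψ b ≤ b - a := by
    rw [div_le_iff₀ hψb, hφb]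
    nlinarith
  have hnonneg : 0 ≤ φ b / ψ b := div_nonneg (by rw [hφb]; nlinarith) hψb.le
  constructor <;> linarith

theorem tendsto_iterate_of_forall_mem_Icc {g : ℝ → ℝ} (hab : a ≤ b)
    (hg : ∀ x ∈ Icc a b, g x ∈ Icc a x) (hcont : ∀ x ∈ Icc a b, ContinuousAt g x)
    (hfix : ∀ x ∈ Icc a b, g x = x → x = a) :
    Tendsto (fun n => g^[n] b) atTop (𝓝 a) ∧ Antitone fun n => g^[n] b := by
  have hmem : ∀ n, g^[n] b ∈ Icc a b := by
    intro n
    induction n with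
    | zero => exact ⟨hab, le_rfl⟩
    | succ n ih =>
      rw [Function.iterate_succ_apply']
      exact Icc_subset_Icc_right ih.2 (hg _ ih)
  have hanti : Antitone fun n => g^[n] b := antitone_nat_of_succ_le fun n => by
    rw [Function.iterate_succ_apply']
    exact (hg _ (hmem n)).2
  have hlim := tendsto_atTop_ciInf hanti ⟨a, by rintro _ ⟨n, rfl⟩; exact (hmem n).1⟩
  have hL := isClosed_Icc.mem_of_tendsto hlim (Eventually.of_forall hmem)
  rw [hfix _ hL (isFixedPt_of_tendsto_iterate hlim (hcont _ hL))] at hlim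
  exact ⟨hlim, hanti⟩

end Interval

noncomputable def halleyDenom (f : ℝ → ℝ) (x : ℝ) : ℝ :=
  deriv f x - deriv (deriv f) x * f x / (2 * deriv f x)

/-- `Φ = f / √f'`, with derivative `halleyPsi f`; both are junk where `f' ≤ 0`. -/
noncomputable def halleyPhi (f : ℝ → ℝ) (x : ℝ) : ℝ := f x / √(deriv f x)

noncomputable def halleyPsi (f : ℝ → ℝ) (x : ℝ) : ℝ := halleyDenom f x / √(deriv f x)

section Halley

variable {f : ℝ → ℝ} {x : ℝ}

lemma halley_eq_sub_halleyPhi_div (hx : 0 < deriv f x) :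
    halley f x = x - halleyPhi f x / halleyPsi f x := by
  rw [halleyPhi, halleyPsi, div_div_div_cancel_right₀ (Real.sqrt_pos.2 hx).ne']
  rfl

lemma hasDerivAt_halleyPhi (hf : ContDiffAt ℝ 2 f x) (hx : 0 < deriv f x) :
    HasDerivAt (halleyPhi f) (halleyPsi f x) x := by
  have hf0 := (hf.differentiableAt (by norm_num)).hasDerivAt
  have hf1 := ((hf.derivWithin (m := 1) (by norm_num)).differentiableAt one_ne_zero).hasDerivAt
  refine (hf0.div (hf1.sqrt hx.ne') (Real.sqrt_pos.2 hx).ne').congr_deriv ?_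
  have hsq := Real.sq_sqrt hx.le
  have hs := Real.sqrt_pos.2 hx
  rw [halleyPsi, halleyDenom]
  generalize √(deriv f x) = s at hsq hs ⊢
  rw [← hsq]
  field_simp

lemma hasDerivAt_halleyPsi (hf : ContDiffAt ℝ 3 f x) (hx : 0 < deriv f x) :
    HasDerivAt (halleyPsi f) (-(1 / 2) * schwarzian f x * halleyPhi f x) x := by
  have hf0 := (hf.differentiableAt (by norm_num)).hasDerivAt
  have hf1' := hf.derivWithin (m := 2) (by norm_num)
  have hf1 := (hf1'.differentiableAt (by norm_num)).hasDerivAt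
  have hf2 := ((hf1'.derivWithin (m := 1) (by norm_num)).differentiableAt one_ne_zero).hasDerivAt
  have hD : HasDerivAt (halleyDenom f) _ x :=
    hf1.sub ((hf2.mul hf0).div (hf1.const_mul 2) (by positivity))
  refine (hD.div (hf1.sqrt hx.ne') (Real.sqrt_pos.2 hx).ne').congr_deriv ?_
  have hsq := Real.sq_sqrt hx.le
  have hs := Real.sqrt_pos.2 hx
  rw [schwarzian, halleyPhi, halleyDenom, Pi.mul_apply]
  generalize √(deriv f x) = s at hsq hs ⊢
  rw [← hsq]
  field_simp
  ring

lemma continuousAt_halley (hf : ContDiffAt ℝ 2 f x) (hx : deriv f x ≠ 0)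
    (hD : halleyDenom f x ≠ 0) : ContinuousAt (halley f) x := by
  have hf0 := (hf.differentiableAt (by norm_num)).continuousAt
  have hf' := hf.derivWithin (m := 1) (by norm_num)
  have hf1 := hf'.continuousAt
  have hf2 := ((hf'.derivWithin (m := 0) (by norm_num)).continuousAt)
  exact continuousAt_id.sub (hf0.div (hf1.sub ((hf2.mul hf0).div (continuousAt_const.mul hf1)
    (by positivity))) hD)

lemma halleyPsi_pos_of_eq_zero (hfx : f x = 0) (hx : 0 < deriv f x) : 0 < halleyPsi f x := by
  simpa [halleyPsi, halleyDenom, hfx] using hx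

end Halley

section HalleyInterval

variable {f : ℝ → ℝ} {a b : ℝ}

lemma monotoneOn_halleyPsi (hab : a ≤ b) (hf : ∀ x ∈ Icc a b, ContDiffAt ℝ 3 f x)
    (hf' : ∀ x ∈ Icc a b, 0 < deriv f x) (hS : ∀ x ∈ Icc a b, schwarzian f x < 0)
    (hfa : f a = 0) : MonotoneOn (halleyPsi f) (Icc a b) := by
  refine monotoneOn_Icc_of_deriv_nonneg_where_pos
    (fun x hx => hasDerivAt_halleyPhi ((hf x hx).of_le (by norm_num)) (hf' x hx))
    (fun x hx => hasDerivAt_halleyPsi (hf x hx) (hf' x hx)) (fun x hx hΦ => ?_)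
    (by simp [halleyPhi, hfa]) (halleyPsi_pos_of_eq_zero hfa (hf' a (left_mem_Icc.2 hab)))
  have := hS x (Ioo_subset_Icc_self hx)
  nlinarith

theorem halley_mem_Icc (hf : ∀ x ∈ Icc a b, ContDiffAt ℝ 3 f x)
    (hf' : ∀ x ∈ Icc a b, 0 < deriv f x) (hS : ∀ x ∈ Icc a b, schwarzian f x < 0)
    (hfa : f a = 0) : ∀ x ∈ Icc a b, halley f x ∈ Icc a x := fun x hx => by
  have hsub : Icc a x ⊆ Icc a b := Icc_subset_Icc_right hx.2
  rw [halley_eq_sub_halleyPhi_div (hf' x hx)]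
  exact sub_div_mem_Icc_of_monotoneOn hx.1
    (fun y hy => hasDerivAt_halleyPhi ((hf y (hsub hy)).of_le (by norm_num)) (hf' y (hsub hy)))
    ((monotoneOn_halleyPsi (hx.1.trans hx.2) hf hf' hS hfa).mono hsub)
    (by simp [halleyPhi, hfa]) (halleyPsi_pos_of_eq_zero hfa (hf' a (hsub (left_mem_Icc.2 hx.1))))

theorem tendsto_halley_iterate_of_le (hab : a ≤ b) (hf : ∀ x ∈ Icc a b, ContDiffAt ℝ 3 f x)
    (hf' : ∀ x ∈ Icc a b, 0 < deriv f x) (hS : ∀ x ∈ Icc a b, schwarzian f x < 0)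
    (hfa : f a = 0) :
    Tendsto (fun n => (halley f)^[n] b) atTop (𝓝 a) ∧ Antitone fun n => (halley f)^[n] b := by
  have hΨ : ∀ x ∈ Icc a b, 0 < halleyPsi f x := fun x hx =>
    (halleyPsi_pos_of_eq_zero hfa (hf' a (left_mem_Icc.2 hab))).trans_le
      (monotoneOn_halleyPsi hab hf hf' hS hfa (left_mem_Icc.2 hab) hx hx.1)
  have hD : ∀ x ∈ Icc a b, halleyDenom f x ≠ 0 := fun x hx hD0 =>
    (hΨ x hx).ne' (by rw [halleyPsi, hD0, zero_div])
  have hinj : InjOn f (Icc a b) := (strictMonoOn_Icc_of_hasDerivAt_pos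
    (fun x hx => ((hf x hx).differentiableAt (by norm_num)).hasDerivAt)
    (fun x hx => hf' x (Ioo_subset_Icc_self hx))).injOn
  refine tendsto_iterate_of_forall_mem_Icc hab (halley_mem_Icc hf hf' hS hfa)
    (fun x hx => continuousAt_halley ((hf x hx).of_le (by norm_num)) (hf' x hx).ne' (hD x hx))
    fun x hx hfix => hinj hx (left_mem_Icc.2 hab) ?_
  have hstep : x - f x / halleyDenom f x = x := hfix
  exact ((div_eq_zero_iff.1 (sub_eq_self.1 hstep)).resolve_right (hD x hx)).trans hfa.symm

end HalleyInterval

section Reflection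

variable (f : ℝ → ℝ)

lemma deriv_neg_eq_neg_deriv : deriv (-f) = -deriv f :=
  deriv.neg'

lemma deriv_comp_neg_eq_neg : deriv (fun y => f (-y)) = -fun y => deriv f (-y) :=
  funext fun x => deriv_comp_neg f x

lemma schwarzian_neg : schwarzian (-f) = schwarzian f := by
  ext x
  simp only [schwarzian, deriv_neg_eq_neg_deriv, Pi.neg_apply, neg_div_neg_eq]

lemma halley_neg : halley (-f) = halley f := by
  ext x
  simp only [halley, deriv_neg_eq_neg_deriv, Pi.neg_apply]
  rw [← neg_div_neg_eq]
  ring_nf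

lemma schwarzian_comp_neg (x : ℝ) : schwarzian (fun y => f (-y)) x = schwarzian f (-x) := by
  simp only [schwarzian, deriv_comp_neg_eq_neg, deriv_neg_eq_neg_deriv, Pi.neg_apply, neg_neg,
    div_neg, neg_div, neg_sq]

lemma halley_comp_neg (x : ℝ) : halley (fun y => f (-y)) x = -halley f (-x) := by
  simp only [halley, deriv_comp_neg_eq_neg, deriv_neg_eq_neg_deriv, Pi.neg_apply, neg_neg]
  rw [← neg_div_neg_eq]
  ring_nf

end Reflection

theorem tendsto_halley_iterate_of_ge {f : ℝ → ℝ} {a b : ℝ} (hba : b ≤ a)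
    (hf : ∀ x ∈ Icc b a, ContDiffAt ℝ 3 f x) (hf' : ∀ x ∈ Icc b a, 0 < deriv f x)
    (hS : ∀ x ∈ Icc b a, schwarzian f x < 0) (hfa : f a = 0) :
    Tendsto (fun n => (halley f)^[n] b) atTop (𝓝 a) ∧ Monotone fun n => (halley f)^[n] b := by
  -- `y ↦ -f (-y)` swaps the sides of the root and keeps `f' > 0`
  set g : ℝ → ℝ := -fun y => f (-y)
  have hmem : ∀ y ∈ Icc (-a) (-b), -y ∈ Icc b a := fun y hy => ⟨le_neg.1 hy.2, neg_le.1 hy.1⟩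
  have hg' : ∀ y, deriv g y = deriv f (-y) := fun y => by
    simp [g, deriv_comp_neg_eq_neg]
  have hconj : Function.Semiconj Neg.neg (halley f) (halley g) := fun x => by
    rw [halley_neg, halley_comp_neg, neg_neg]
  obtain ⟨hlim, hanti⟩ := tendsto_halley_iterate_of_le (f := g) (neg_le_neg hba)
    (fun y hy => ((hf _ (hmem y hy)).comp y contDiff_neg.contDiffAt).neg)
    (fun y hy => (hg' y).symm ▸ hf' _ (hmem y hy))
    (fun y hy => by rw [schwarzian_neg, schwarzian_comp_neg]; exact hS _ (hmem y hy))
    (by simp [g, hfa])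
  simp only [← (hconj.iterate_right _).eq] at hlim hanti
  exact ⟨by simpa using hlim.neg, by simpa using hanti.neg⟩

theorem stmt7_general (f : ℝ → ℝ) (J : Set ℝ) (hJc : Convex ℝ J)
    (hf : ∀ x ∈ J, ContDiffAt ℝ 3 f x)
    (hf' : ∀ x ∈ J, deriv f x ≠ 0)
    (α : ℝ) (hα : α ∈ J) (hfα : f α = 0)
    (hS : ∀ x ∈ J, schwarzian f x < 0) :
    ∀ x₀ ∈ J,
      Filter.Tendsto (fun n => (halley f)^[n] x₀) Filter.atTop (nhds α) ∧
      (Monotone (fun n => (halley f)^[n] x₀) ∨ Antitone (fun n => (halley f)^[n] x₀)) := by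
  intro x₀ hx₀
  wlog hpos : ∀ x ∈ J, 0 < deriv f x generalizing f
  · have hneg : ∀ x ∈ J, deriv f x < 0 :=
      (hasDerivWithinAt_forall_lt_or_forall_gt_of_forall_ne hJc
        (fun x hx => ((hf x hx).differentiableAt (by norm_num)).hasDerivAt.hasDerivWithinAt)
        hf').resolve_right hpos
    simpa only [halley_neg] using this (-f) (fun x hx => (hf x hx).neg)
      (fun x hx => by simpa [deriv_neg_eq_neg_deriv] using (hneg x hx).ne)
      (by simp [hfα]) (fun x hx => by simpa [schwarzian_neg] using hS x hx)
      (fun x hx => by simpa [deriv_neg_eq_neg_deriv] using hneg x hx)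
  rcases le_total α x₀ with h | h
  · have hsub : Icc α x₀ ⊆ J := hJc.ordConnected.out hα hx₀
    exact (tendsto_halley_iterate_of_le h (fun x hx => hf x (hsub hx))
      (fun x hx => hpos x (hsub hx)) (fun x hx => hS x (hsub hx)) hfα).imp_right Or.inr
  · have hsub : Icc x₀ α ⊆ J := hJc.ordConnected.out hx₀ hα
    exact (tendsto_halley_iterate_of_ge h (fun x hx => hf x (hsub hx))
      (fun x hx => hpos x (hsub hx)) (fun x hx => hS x (hsub hx)) hfα).imp_right Or.inl

/-- If on an open interval `J` one has `f' ≠ 0`, `f` is `C³` (so `f'''` continuous),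
`{f,x} < 0` on `J`, and `f(α) = 0` with `α ∈ J`, then Halley's iteration converges
monotonically to `α` for any starting value `x₀ ∈ J`. -/
theorem stmt7 (f : ℝ → ℝ) (J : Set ℝ) (hJ : IsOpen J) (hJc : Convex ℝ J)
    (hf : ∀ x ∈ J, ContDiffAt ℝ 3 f x)
    (hf' : ∀ x ∈ J, deriv f x ≠ 0)
    (α : ℝ) (hα : α ∈ J) (hfα : f α = 0)
    (hS : ∀ x ∈ J, schwarzian f x < 0) :
    ∀ x₀ ∈ J,
      Filter.Tendsto (fun n => (halley f)^[n] x₀) Filter.atTop (nhds α) ∧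
      (Monotone (fun n => (halley f)^[n] x₀) ∨ Antitone (fun n => (halley f)^[n] x₀)) :=
  stmt7_general f J hJc hf hf' α hα hfα hS
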